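/- arXiv:2501.03973 — 4 statements merged into one kernel-verified Lean document; each statement's English description precedes it below -/
import Mathlib

section
/- Let N be a positive integer, let 0 < α < 1/2 with αN an integer, let δ > 0, and let x : {1,…,N} → {0,1} be a fixed binary string. If I_t is a uniformly random subset of {1,…,N} of size αN, then the probability that |r_H(x|_{I_t}) − r_H(x|_{\bar{I_t}})| > δ (where \bar{I_t} is the complement of I_t) is at most 2·exp(−2·α·(1−α)²·N·δ²). -/
open Finset

open Real in
lemma two_point_pos {p : ℝ} (hp0 : 0 ≤ p) (hp1 : p ≤ 1) (t : ℝ) :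
    0 < p * Real.exp t + (1 - p) := by
  nlinarith [Real.exp_pos t, mul_nonneg hp0 (Real.exp_pos t).le]

lemma hoeffding_two_point {p : ℝ} (hp0 : 0 ≤ p) (hp1 : p ≤ 1) (s : ℝ) :
    p * Real.exp s + (1 - p) ≤ Real.exp (p * s + s ^ 2 / 8) := by
  set F : ℝ → ℝ := fun t => p * t + t ^ 2 / 8 - Real.log (p * Real.exp t + (1 - p)) with hFdef
  set G : ℝ → ℝ := fun t => p + t / 4 - p * Real.exp t / (p * Real.exp t + (1 - p)) with hGdef
  have hv : ∀ t : ℝ, 0 < p * Real.exp t + (1 - p) := two_point_pos hp0 hp1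
  have hinner : ∀ t : ℝ, HasDerivAt (fun t => p * Real.exp t + (1 - p)) (p * Real.exp t) t := by
    intro t
    simpa using ((Real.hasDerivAt_exp t).const_mul p).add_const (1 - p)
  have hnum : ∀ t : ℝ, HasDerivAt (fun t => p * Real.exp t) (p * Real.exp t) t := fun t =>
    (Real.hasDerivAt_exp t).const_mul p
  have hF : ∀ t : ℝ, HasDerivAt F (G t) t := by
    intro t
    have h1 : HasDerivAt (fun t : ℝ => p * t) p t := by
      simpa using (hasDerivAt_id t).const_mul p
    have h2 : HasDerivAt (fun t : ℝ => t ^ 2 / 8) (t / 4) t := by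
      have := (hasDerivAt_pow 2 t).div_const 8
      refine this.congr_deriv ?_
      norm_num
      ring
    have h3 : HasDerivAt (fun t => Real.log (p * Real.exp t + (1 - p)))
        ((p * Real.exp t + (1 - p))⁻¹ * (p * Real.exp t)) t :=
      (Real.hasDerivAt_log (hv t).ne').comp (h := fun t => p * Real.exp t + (1 - p)) t (hinner t)
    have := (h1.add h2).sub h3
    refine this.congr_deriv ?_
    simp only [hGdef]
    ring
  have hG : ∀ t : ℝ, HasDerivAt G
      (1 / 4 - p * Real.exp t * (1 - p) / (p * Real.exp t + (1 - p)) ^ 2) t := by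
    intro t
    have h2 : HasDerivAt (fun t : ℝ => p + t / 4) (1 / 4) t := by
      simpa using ((hasDerivAt_id t).div_const 4).const_add p
    have h3 := (hnum t).div (hinner t) (hv t).ne'
    have h4 := h2.sub h3
    refine h4.congr_deriv ?_
    have hvne := (hv t).ne'
    field_simp
    ring
  have hGderiv : ∀ t : ℝ, 0 ≤ deriv G t := by
    intro t
    rw [(hG t).deriv]
    have h1 : 0 < (p * Real.exp t + (1 - p)) ^ 2 := pow_pos (hv t) 2
    rw [sub_nonneg, div_le_iff₀ h1]
    nlinarith [sq_nonneg (p * Real.exp t - (1 - p)), mul_nonneg hp0 (Real.exp_pos t).le]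
  have hGmono : Monotone G :=
    monotone_of_deriv_nonneg (fun t => (hG t).differentiableAt) hGderiv
  have hG0 : G 0 = 0 := by
    simp [hGdef]
  have hF0 : F 0 = 0 := by
    simp [hFdef]
  have hFnonneg : ∀ t : ℝ, 0 ≤ F t := by
    intro t
    rcases le_or_gt 0 t with ht | ht
    · have hmono : MonotoneOn F (Set.Ici (0 : ℝ)) := by
        apply monotoneOn_of_deriv_nonneg (convex_Ici 0)
          (fun t _ => ((hF t).differentiableAt).continuousAt.continuousWithinAt)
          (fun t _ => ((hF t).differentiableAt).differentiableWithinAt)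
        intro u hu
        rw [(hF u).deriv]
        have : (0:ℝ) ≤ u := le_of_lt (by simpa using hu)
        calc (0:ℝ) = G 0 := hG0.symm
          _ ≤ G u := hGmono this
      have := hmono (Set.self_mem_Ici) (Set.mem_Ici.2 ht) ht
      rwa [hF0] at this
    · have hmono : AntitoneOn F (Set.Iic (0 : ℝ)) := by
        apply antitoneOn_of_deriv_nonpos (convex_Iic 0)
          (fun t _ => ((hF t).differentiableAt).continuousAt.continuousWithinAt)
          (fun t _ => ((hF t).differentiableAt).differentiableWithinAt)
        intro u hu
        rw [(hF u).deriv]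
        have : u ≤ (0:ℝ) := le_of_lt (by simpa using hu)
        calc G u ≤ G 0 := hGmono this
          _ = 0 := hG0
      have := hmono (Set.mem_Iic.2 ht.le) (Set.self_mem_Iic) ht.le
      rwa [hF0] at this
  have hlog : Real.log (p * Real.exp s + (1 - p)) ≤ p * s + s ^ 2 / 8 := by
    have := hFnonneg s
    simp only [hFdef] at this
    linarith
  calc p * Real.exp s + (1 - p)
      = Real.exp (Real.log (p * Real.exp s + (1 - p))) := (Real.exp_log (hv s)).symm
    _ ≤ Real.exp (p * s + s ^ 2 / 8) := Real.exp_le_exp.2 hlog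

lemma key_identity {ι : Type*} [DecidableEq ι] (s : Finset ι) (a : ℕ) (f : Finset ι → ℝ) :
    ((a + 1 : ℕ) : ℝ) * ∑ I ∈ s.powersetCard (a + 1), f I
      = ∑ i ∈ s, ∑ J ∈ (s.erase i).powersetCard a, f (insert i J) := by
  rw [mul_sum]
  have h1 : ∀ I ∈ s.powersetCard (a + 1),
      ((a + 1 : ℕ) : ℝ) * f I = ∑ i ∈ s, if i ∈ I then f I else 0 := by
    intro I hI
    rw [mem_powersetCard] at hI
    rw [sum_ite_mem, inter_eq_right.2 hI.1, sum_const, hI.2]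
    simp [nsmul_eq_mul]
  rw [sum_congr rfl h1, sum_comm]
  refine sum_congr rfl fun i hi => ?_
  rw [sum_ite, sum_const_zero, add_zero]
  refine sum_nbij' (fun I => I.erase i) (fun J => insert i J) ?_ ?_ ?_ ?_ ?_
  · intro I hI
    simp only [mem_filter, mem_powersetCard] at hI
    obtain ⟨⟨hsub, hcard⟩, hmem⟩ := hI
    rw [mem_powersetCard]
    constructor
    · intro j hj
      rw [mem_erase] at hj ⊢
      exact ⟨hj.1, hsub hj.2⟩
    · rw [card_erase_of_mem hmem, hcard]; rfl
  · intro J hJ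
    rw [mem_powersetCard] at hJ
    obtain ⟨hsub, hcard⟩ := hJ
    have hiJ : i ∉ J := fun h => (mem_erase.1 (hsub h)).1 rfl
    simp only [mem_filter, mem_powersetCard]
    refine ⟨⟨?_, ?_⟩, mem_insert_self i J⟩
    · intro j hj
      rcases mem_insert.1 hj with rfl | hj
      · exact hi
      · exact (erase_subset i s) (hsub hj)
    · rw [card_insert_of_notMem hiJ, hcard]
  · intro I hI
    simp only [mem_filter] at hI
    exact insert_erase hI.2
  · intro J hJ
    rw [mem_powersetCard] at hJ
    have hiJ : i ∉ J := fun h => (mem_erase.1 (hJ.1 h)).1 rfl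
    exact erase_insert hiJ
  · intro I hI
    simp only [mem_filter] at hI
    rw [insert_erase hI.2]

open Real in
lemma step_ineq (lam : ℝ) (n a K : ℕ) (h : a + 1 ≤ n) (hK : K ≤ n) :
    (K : ℝ) * Real.exp (lam + lam * a * ((K : ℝ) - 1) / ((n : ℝ) - 1))
      + ((n : ℝ) - K) * Real.exp (lam * a * K / ((n : ℝ) - 1))
      ≤ n * Real.exp (lam * (a + 1) * K / n + lam ^ 2 / 8) := by
  have hn : 0 < n := lt_of_lt_of_le (Nat.succ_pos a) h
  have hnR : (0:ℝ) < n := by exact_mod_cast hn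
  have hKR : (K:ℝ) ≤ n := by exact_mod_cast hK
  set p : ℝ := (K:ℝ) / n with hp
  have hp0 : 0 ≤ p := div_nonneg (Nat.cast_nonneg K) hnR.le
  have hp1 : p ≤ 1 := by rw [hp, div_le_one hnR]; exact hKR
  have hnp : (n:ℝ) * p = K := by rw [hp]; field_simp
  have hnq : (n:ℝ) * (1 - p) = (n:ℝ) - K := by rw [hp]; field_simp
  rcases Nat.eq_zero_or_pos a with rfl | ha
  · have hh := hoeffding_two_point hp0 hp1 lam
    have e1 : lam + lam * (0:ℕ) * ((K : ℝ) - 1) / ((n : ℝ) - 1) = lam := by simp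
    have e2 : lam * (0:ℕ) * (K:ℝ) / ((n : ℝ) - 1) = 0 := by simp
    rw [e1, e2, Real.exp_zero]
    have e3 : lam * ((0:ℕ) + 1) * K / n + lam ^ 2 / 8 = p * lam + lam ^ 2 / 8 := by
      rw [hp]; push_cast; ring
    rw [e3]
    calc (K:ℝ) * Real.exp lam + ((n:ℝ) - K) * 1
        = (n:ℝ) * (p * Real.exp lam + (1 - p)) := by rw [mul_add, ← mul_assoc, hnp, hnq]; ring
      _ ≤ (n:ℝ) * Real.exp (p * lam + lam ^ 2 / 8) := by
          exact mul_le_mul_of_nonneg_left (hoeffding_two_point hp0 hp1 lam) hnR.le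
  · have hn2 : 2 ≤ n := le_trans (by omega) h
    have hone : (0:ℝ) < (n:ℝ) - 1 := by
      have : (2:ℝ) ≤ n := by exact_mod_cast hn2
      linarith
    set c : ℝ := lam * a / ((n:ℝ) - 1) with hc
    set l' : ℝ := lam - c with hl'
    have e1 : lam + lam * a * ((K:ℝ) - 1) / ((n:ℝ) - 1) = c * K + l' := by
      rw [hl', hc]; field_simp; ring
    have e2 : lam * a * (K:ℝ) / ((n:ℝ) - 1) = c * K := by
      rw [hc]; field_simp
    rw [e1, e2, Real.exp_add]
    have key1 : c * K + (p * l' + l' ^ 2 / 8) ≤ lam * (a + 1) * K / n + lam ^ 2 / 8 := by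
      have heq : c * (K:ℝ) + p * l' = lam * (a + 1) * K / n := by
        rw [hl', hc, hp]; field_simp; ring
      have hth : l' = lam * (((n:ℝ) - 1 - a) / ((n:ℝ) - 1)) := by
        rw [hl', hc]; field_simp
      have hth0 : 0 ≤ ((n:ℝ) - 1 - a) / ((n:ℝ) - 1) := by
        apply div_nonneg _ hone.le
        have : (a:ℝ) + 1 ≤ n := by exact_mod_cast h
        linarith
      have hth1 : ((n:ℝ) - 1 - a) / ((n:ℝ) - 1) ≤ 1 := by
        rw [div_le_one hone]
        have : (0:ℝ) ≤ a := Nat.cast_nonneg a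
        linarith
      set th : ℝ := ((n:ℝ) - 1 - a) / ((n:ℝ) - 1) with hthdef
      have hsq : l' ^ 2 ≤ lam ^ 2 := by
        rw [hth, mul_pow]
        nlinarith [mul_nonneg (sq_nonneg lam)
          (mul_nonneg (sub_nonneg.2 hth1) (by linarith : (0:ℝ) ≤ 1 + th))]
      calc c * (K:ℝ) + (p * l' + l' ^ 2 / 8) = (c * K + p * l') + l' ^ 2 / 8 := by ring
        _ ≤ (c * K + p * l') + lam ^ 2 / 8 := by gcongr
        _ = lam * (a + 1) * K / n + lam ^ 2 / 8 := by rw [heq]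
    set E1 : ℝ := Real.exp (c * K) with hE1
    set E2 : ℝ := Real.exp l' with hE2
    have hE1pos : 0 < E1 := Real.exp_pos _
    have hid : (K:ℝ) * (E1 * E2) + ((n:ℝ) - K) * E1 = (n:ℝ) * E1 * (p * E2 + (1 - p)) := by
      rw [← hnp]; ring
    calc (K:ℝ) * (E1 * E2) + ((n:ℝ) - K) * E1
        = (n:ℝ) * E1 * (p * E2 + (1 - p)) := hid
      _ ≤ (n:ℝ) * E1 * Real.exp (p * l' + l' ^ 2 / 8) := by
          apply mul_le_mul_of_nonneg_left (hoeffding_two_point hp0 hp1 l')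
          positivity
      _ = (n:ℝ) * Real.exp (c * K + (p * l' + l' ^ 2 / 8)) := by
          rw [hE1, mul_assoc, ← Real.exp_add]
      _ ≤ (n:ℝ) * Real.exp (lam * (a + 1) * K / n + lam ^ 2 / 8) :=
          mul_le_mul_of_nonneg_left (Real.exp_le_exp.2 key1) hnR.le

open Real in
lemma mgf_le {ι : Type*} [DecidableEq ι] (y : ι → Bool) (lam : ℝ) :
    ∀ (a : ℕ) (s : Finset ι), a ≤ s.card →
      ∑ I ∈ s.powersetCard a, Real.exp (lam * ((I.filter fun i => y i = true).card : ℝ))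
        ≤ (s.card.choose a : ℝ) *
          Real.exp (lam * a * (((s.filter fun i => y i = true).card : ℝ)) / s.card
            + lam ^ 2 * a / 8) := by
  intro a
  induction a with
  | zero =>
    intro s _
    simp [Finset.powersetCard_zero]
  | succ a ih =>
    intro s hs
    set n := s.card with hn
    set K := (s.filter fun i => y i = true).card with hKdef
    have hn1 : 1 ≤ n := le_trans (by omega) hs
    have hKn : K ≤ n := card_filter_le s _
    have hnR : (1:ℝ) ≤ (n:ℝ) := by exact_mod_cast hn1
    have hcast : ((n - 1 : ℕ) : ℝ) = (n:ℝ) - 1 := by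
      rw [Nat.cast_sub hn1]; norm_num
    set χ : ι → ℝ := fun i => if y i then 1 else 0 with hχ
    have hinner : ∀ i ∈ s,
        ∑ J ∈ (s.erase i).powersetCard a,
          Real.exp (lam * (((insert i J).filter fun j => y j = true).card : ℝ))
        ≤ ((n-1).choose a : ℝ) * (Real.exp (lam * χ i) *
            Real.exp (lam * a * ((K:ℝ) - χ i) / ((n:ℝ) - 1) + lam ^ 2 * a / 8)) := by
      intro i hi
      have hcard_erase : (s.erase i).card = n - 1 := by rw [card_erase_of_mem hi]
      have han : a ≤ (s.erase i).card := by rw [hcard_erase]; omega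
      have hKi : (((s.erase i).filter fun j => y j = true).card : ℝ) = (K:ℝ) - χ i := by
        rw [Finset.filter_erase]
        by_cases hyi : y i
        · have hmem : i ∈ s.filter fun j => y j = true := mem_filter.2 ⟨hi, by simp [hyi]⟩
          rw [card_erase_of_mem hmem]
          have hK1 : 1 ≤ K := card_pos.2 ⟨i, hmem⟩
          rw [Nat.cast_sub hK1]
          simp [hχ, hyi]
        · rw [erase_eq_of_notMem (fun hmem => hyi (by simpa using (mem_filter.1 hmem).2))]
          simp [hχ, hyi, hKdef]
      have hsum_eq : ∀ J ∈ (s.erase i).powersetCard a,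
          Real.exp (lam * (((insert i J).filter fun j => y j = true).card : ℝ))
          = Real.exp (lam * χ i) *
            Real.exp (lam * ((J.filter fun j => y j = true).card : ℝ)) := by
        intro J hJ
        have hJsub : J ⊆ s.erase i := (mem_powersetCard.1 hJ).1
        have hiJ : i ∉ J := fun h => (mem_erase.1 (hJsub h)).1 rfl
        rw [← Real.exp_add]
        congr 1
        by_cases hyi : y i
        · rw [Finset.filter_insert, if_pos (by simp [hyi]),
            card_insert_of_notMem (fun h => hiJ (mem_filter.1 h).1)]
          push_cast
          simp only [hχ, if_pos hyi]
          ring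
        · rw [Finset.filter_insert, if_neg (by simp [hyi])]
          simp only [hχ, if_neg hyi]
          ring
      rw [sum_congr rfl hsum_eq, ← mul_sum]
      have := ih (s.erase i) han
      rw [hcard_erase, hKi, hcast] at this
      calc Real.exp (lam * χ i) *
            ∑ J ∈ (s.erase i).powersetCard a,
              Real.exp (lam * ((J.filter fun j => y j = true).card : ℝ))
          ≤ Real.exp (lam * χ i) * (((n-1).choose a : ℝ) *
              Real.exp (lam * a * ((K:ℝ) - χ i) / ((n:ℝ) - 1) + lam ^ 2 * a / 8)) :=
            mul_le_mul_of_nonneg_left this (Real.exp_pos _).le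
        _ = ((n-1).choose a : ℝ) * (Real.exp (lam * χ i) *
              Real.exp (lam * a * ((K:ℝ) - χ i) / ((n:ℝ) - 1) + lam ^ 2 * a / 8)) := by ring
    have key := key_identity s a (fun I => Real.exp (lam * ((I.filter fun i => y i = true).card : ℝ)))
    have hsum2 : ∑ i ∈ s, Real.exp (lam * χ i) *
          Real.exp (lam * a * ((K:ℝ) - χ i) / ((n:ℝ) - 1) + lam ^ 2 * a / 8)
        = Real.exp (lam ^ 2 * a / 8) *
          ((K:ℝ) * Real.exp (lam + lam * a * ((K:ℝ) - 1) / ((n:ℝ) - 1))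
            + ((n:ℝ) - K) * Real.exp (lam * a * K / ((n:ℝ) - 1))) := by
      rw [← Finset.sum_filter_add_sum_filter_not s (fun i => y i = true)]
      have h1 : ∀ i ∈ s.filter (fun i => y i = true), Real.exp (lam * χ i) *
            Real.exp (lam * a * ((K:ℝ) - χ i) / ((n:ℝ) - 1) + lam ^ 2 * a / 8)
          = Real.exp lam * Real.exp (lam * a * ((K:ℝ) - 1) / ((n:ℝ) - 1) + lam ^ 2 * a / 8) := by
        intro i hi
        have := (mem_filter.1 hi).2
        simp [hχ, this]
      have h2 : ∀ i ∈ s.filter (fun i => ¬ y i = true), Real.exp (lam * χ i) *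
            Real.exp (lam * a * ((K:ℝ) - χ i) / ((n:ℝ) - 1) + lam ^ 2 * a / 8)
          = Real.exp (lam * a * (K:ℝ) / ((n:ℝ) - 1) + lam ^ 2 * a / 8) := by
        intro i hi
        have := (mem_filter.1 hi).2
        simp [hχ, this]
      rw [sum_congr rfl h1, sum_congr rfl h2, sum_const, sum_const]
      have hc2 : (s.filter (fun i => ¬ y i = true)).card = n - K := by
        rw [Finset.filter_not, card_sdiff_of_subset (filter_subset _ s)]
      rw [← hKdef, hc2, nsmul_eq_mul, nsmul_eq_mul]
      rw [Nat.cast_sub hKn]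
      rw [Real.exp_add lam (lam * a * ((K:ℝ) - 1) / ((n:ℝ) - 1)),
        Real.exp_add (lam * a * ((K:ℝ) - 1) / ((n:ℝ) - 1)) (lam ^ 2 * a / 8),
        Real.exp_add (lam * a * (K:ℝ) / ((n:ℝ) - 1)) (lam ^ 2 * a / 8)]
      ring
    have hstep := step_ineq lam n a K hs hKn
    have hmain : ((a + 1 : ℕ) : ℝ) * ∑ I ∈ s.powersetCard (a + 1),
          Real.exp (lam * ((I.filter fun i => y i = true).card : ℝ))
        ≤ ((n-1).choose a : ℝ) * (Real.exp (lam ^ 2 * a / 8) *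
          ((n:ℝ) * Real.exp (lam * ((a:ℝ) + 1) * K / n + lam ^ 2 / 8))) := by
      rw [key]
      have b1 := sum_le_sum hinner
      rw [← mul_sum, hsum2] at b1
      refine b1.trans ?_
      have hle : (K:ℝ) * Real.exp (lam + lam * a * ((K:ℝ) - 1) / ((n:ℝ) - 1))
            + ((n:ℝ) - K) * Real.exp (lam * a * K / ((n:ℝ) - 1))
          ≤ (n:ℝ) * Real.exp (lam * ((a:ℝ) + 1) * K / n + lam ^ 2 / 8) := hstep
      gcongr
    have hnat : n * ((n-1).choose a) = (n.choose (a+1)) * (a+1) := by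
      have h := Nat.add_one_mul_choose_eq (n-1) a
      have h2 : n - 1 + 1 = n := by omega
      simpa [Nat.succ_eq_add_one, h2] using h
    have hchoose : (n:ℝ) * ((n-1).choose a : ℝ) = (n.choose (a+1) : ℝ) * ((a:ℝ) + 1) := by
      exact_mod_cast congrArg (Nat.cast : ℕ → ℝ) hnat
    have hfinal : ((a + 1 : ℕ) : ℝ) * ∑ I ∈ s.powersetCard (a + 1),
          Real.exp (lam * ((I.filter fun i => y i = true).card : ℝ))
        ≤ ((a + 1 : ℕ) : ℝ) * ((n.choose (a+1) : ℝ) *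
            Real.exp (lam * ((a:ℝ) + 1) * (K:ℝ) / n + lam ^ 2 * ((a:ℝ)+1) / 8)) := by
      refine le_trans hmain (le_of_eq ?_)
      rw [show ((n-1).choose a : ℝ) * (Real.exp (lam ^ 2 * a / 8) *
            ((n:ℝ) * Real.exp (lam * ((a:ℝ) + 1) * K / n + lam ^ 2 / 8)))
          = ((n:ℝ) * ((n-1).choose a : ℝ)) *
            (Real.exp (lam ^ 2 * a / 8) * Real.exp (lam * ((a:ℝ) + 1) * K / n + lam ^ 2 / 8)) by ring]
      rw [hchoose, ← Real.exp_add]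
      push_cast
      rw [show lam ^ 2 * (a:ℝ) / 8 + (lam * ((a:ℝ) + 1) * K / n + lam ^ 2 / 8)
          = lam * ((a:ℝ) + 1) * (K:ℝ) / n + lam ^ 2 * ((a:ℝ)+1) / 8 by ring]
      ring
    have hpos : (0:ℝ) < ((a + 1 : ℕ) : ℝ) := by positivity
    have hres := le_of_mul_le_mul_left hfinal hpos
    refine le_trans hres (le_of_eq ?_)
    push_cast
    ring_nf

open Real in
lemma tail_count {ι : Type*} [DecidableEq ι] (y : ι → Bool) (s : Finset ι) (a : ℕ)
    (ha : a ≤ s.card) (t : ℝ) (ht : 0 < t) :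
    ∑ I ∈ s.powersetCard a,
        (if t * a < ((I.filter fun i => y i = true).card : ℝ)
            - a * ((s.filter fun i => y i = true).card : ℝ) / s.card then (1:ℝ) else 0)
      ≤ (s.card.choose a : ℝ) * Real.exp (-2 * a * t ^ 2) := by
  set n := s.card with hn
  set K := (s.filter fun i => y i = true).card with hK
  set μ : ℝ := (a:ℝ) * K / n with hμ
  set lam : ℝ := 4 * t with hlam
  have hlam0 : 0 < lam := by rw [hlam]; linarith
  calc ∑ I ∈ s.powersetCard a,
        (if t * a < ((I.filter fun i => y i = true).card : ℝ) - μ then (1:ℝ) else 0)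
      ≤ ∑ I ∈ s.powersetCard a,
        Real.exp (lam * (((I.filter fun i => y i = true).card : ℝ) - μ - t * a)) := by
        refine sum_le_sum fun I _ => ?_
        split
        · rename_i hcond
          have h0 : (0:ℝ) ≤ lam * (((I.filter fun i => y i = true).card : ℝ) - μ - t * a) :=
            le_of_lt (mul_pos hlam0 (by linarith))
          calc (1:ℝ) = Real.exp 0 := Real.exp_zero.symm
            _ ≤ _ := Real.exp_le_exp.2 h0
        · exact (Real.exp_pos _).le
    _ = Real.exp (-(lam * (μ + t * a))) * ∑ I ∈ s.powersetCard a,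
          Real.exp (lam * ((I.filter fun i => y i = true).card : ℝ)) := by
        rw [mul_sum]
        refine sum_congr rfl fun I _ => ?_
        rw [← Real.exp_add]
        congr 1
        ring
    _ ≤ Real.exp (-(lam * (μ + t * a))) *
          ((n.choose a : ℝ) * Real.exp (lam * a * (K:ℝ) / n + lam ^ 2 * a / 8)) :=
        mul_le_mul_of_nonneg_left (mgf_le y lam a s ha) (Real.exp_pos _).le
    _ = (n.choose a : ℝ) * Real.exp (-2 * a * t ^ 2) := by
        rw [← mul_assoc, mul_comm (Real.exp _) ((n.choose a : ℝ)), mul_assoc, ← Real.exp_add]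
        congr 1
        rw [hμ, hlam]
        ring

/-- Relative Hamming weight of the restriction of `x` to the index set `S`:
`r_H(x|_S) = (number of `i ∈ S` with `x i = 1`) / |S|`. -/
noncomputable def relHamming {N : ℕ} (x : Fin N → Bool) (S : Finset (Fin N)) : ℝ :=
  ((S.filter fun i => x i = true).card : ℝ) / (S.card : ℝ)

/-- Hoeffding inequality for sampling without replacement, comparing the sampled
subset with its complement: for a uniformly random subset `I_t` of `{1,…,N}` of size
`αN`, the probability that `|r_H(x|_{I_t}) − r_H(x|_{\bar I_t})| > δ` is at most
`2·exp(−2·α·(1−α)²·N·δ²)`. -/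
theorem hoeffding_complement (N : ℕ) (hN : 0 < N) (α δ : ℝ)
    (hα0 : 0 < α) (hα : α < 1/2) (hδ : 0 < δ)
    (a : ℕ) (ha : (a : ℝ) = α * N) (x : Fin N → Bool) :
    ((Finset.powersetCard a (Finset.univ : Finset (Fin N))).card : ℝ)⁻¹ *
      ∑ It ∈ Finset.powersetCard a (Finset.univ : Finset (Fin N)),
        (if δ < |relHamming x It - relHamming x Itᶜ| then (1 : ℝ) else 0)
    ≤ 2 * Real.exp (-2 * α * (1 - α)^2 * N * δ^2) := by
  have hNR : (0:ℝ) < N := by exact_mod_cast hN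
  have haR : (0:ℝ) < a := by rw [ha]; positivity
  have ha0 : 0 < a := by exact_mod_cast haR
  have haN : a < N := by
    have : (a:ℝ) < N := by rw [ha]; nlinarith
    exact_mod_cast this
  have hcardU : (Finset.univ : Finset (Fin N)).card = N := by simp
  have haN' : a ≤ (Finset.univ : Finset (Fin N)).card := by rw [hcardU]; exact haN.le
  set t : ℝ := (1 - α) * δ with htdef
  have ht : 0 < t := by rw [htdef]; nlinarith
  set K := ((Finset.univ : Finset (Fin N)).filter fun i => x i = true).card with hKdef
  have hKN : K ≤ N := by rw [← hcardU]; exact card_filter_le _ _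
  set y : Fin N → Bool := fun i => !(x i) with hy
  set Ky := ((Finset.univ : Finset (Fin N)).filter fun i => y i = true).card with hKydef
  have hKy : Ky = N - K := by
    rw [hKydef, hKdef]
    rw [show ((Finset.univ : Finset (Fin N)).filter fun i => y i = true)
        = ((Finset.univ : Finset (Fin N)).filter fun i => ¬ (x i = true)) by
      apply filter_congr; intro i _; simp [hy]]
    rw [Finset.filter_not, card_sdiff_of_subset (filter_subset _ _), hcardU]
  -- pointwise bound on the indicator
  have hpoint : ∀ I ∈ Finset.powersetCard a (Finset.univ : Finset (Fin N)),
      (if δ < |relHamming x I - relHamming x Iᶜ| then (1 : ℝ) else 0)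
      ≤ (if t * a < ((I.filter fun i => x i = true).card : ℝ)
            - a * (K : ℝ) / N then (1:ℝ) else 0)
        + (if t * a < ((I.filter fun i => y i = true).card : ℝ)
            - a * (Ky : ℝ) / N then (1:ℝ) else 0) := by
    intro I hI
    have hIcard : I.card = a := (mem_powersetCard.1 hI).2
    have hIC : Iᶜ.card = N - a := by
      rw [Finset.card_compl, hIcard, Fintype.card_fin]
    set w := (I.filter fun i => x i = true).card with hw
    have hsplit : w + (Iᶜ.filter fun i => x i = true).card = K := by
      rw [hw, hKdef, ← Finset.union_compl I, Finset.filter_union,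
        card_union_of_disjoint (disjoint_filter_filter disjoint_compl_right)]
    have hwK : w ≤ K := by omega
    have hwa : w ≤ a := by rw [hw, ← hIcard]; exact card_filter_le _ _
    have hwy : (I.filter fun i => y i = true).card = a - w := by
      rw [show (I.filter fun i => y i = true) = (I.filter fun i => ¬ (x i = true)) by
        apply filter_congr; intro i _; simp [hy]]
      rw [Finset.filter_not, card_sdiff_of_subset (filter_subset _ _), hIcard, hw]
    have hcompl : relHamming x Iᶜ = ((K:ℝ) - w) / ((N:ℝ) - a) := by
      rw [relHamming, hIC]
      congr 1
      · rw [show (Iᶜ.filter fun i => x i = true).card = K - w by omega]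
        rw [Nat.cast_sub hwK]
      · rw [Nat.cast_sub haN.le]
    have hself : relHamming x I = (w:ℝ) / a := by rw [relHamming, hIcard, hw]
    have hNa : (0:ℝ) < (N:ℝ) - a := by
      have : (a:ℝ) < N := by exact_mod_cast haN
      linarith
    have hD : relHamming x I - relHamming x Iᶜ
        = ((N:ℝ) / ((a:ℝ) * ((N:ℝ) - a))) * ((w:ℝ) - a * K / N) := by
      rw [hself, hcompl]
      field_simp
      ring
    have hta : t * a = δ * ((a:ℝ) * ((N:ℝ) - a)) / N := by
      rw [htdef]
      have : ((N:ℝ) - a) = N * (1 - α) := by rw [ha]; ring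
      rw [this]
      field_simp
    have hP : (0:ℝ) < (a:ℝ) * ((N:ℝ) - a) := mul_pos haR hNa
    have hiff : δ < |relHamming x I - relHamming x Iᶜ| ↔ t * a < |(w:ℝ) - a * K / N| := by
      rw [hD, abs_mul, abs_of_pos (by positivity : (0:ℝ) < (N:ℝ) / ((a:ℝ) * ((N:ℝ) - a))), hta,
        div_mul_eq_mul_div, lt_div_iff₀ hP, div_lt_iff₀ hNR,
        mul_comm (|(w:ℝ) - a * K / N|) ((N:ℝ))]
    have hμy : (a:ℝ) * (Ky:ℝ) / N = (a:ℝ) - (a:ℝ) * K / N := by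
      rw [hKy, Nat.cast_sub hKN]
      field_simp
    have hwyR : (((I.filter fun i => y i = true).card : ℝ)) = (a:ℝ) - w := by
      rw [hwy, Nat.cast_sub hwa]
    split
    · rename_i hcond
      rw [hiff] at hcond
      rcases lt_abs.1 hcond with hcase | hcase
      · rw [if_pos hcase]
        have h2 : (0:ℝ) ≤ (if t * a < ((I.filter fun i => y i = true).card : ℝ)
            - a * (Ky : ℝ) / N then (1:ℝ) else 0) := by positivity
        linarith
      · have hcase2 : t * a < ((I.filter fun i => y i = true).card : ℝ) - a * (Ky : ℝ) / N := by
          rw [hwyR, hμy]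
          linarith
        rw [if_pos hcase2]
        have h2 : (0:ℝ) ≤ (if t * a < ((I.filter fun i => x i = true).card : ℝ)
            - a * (K : ℝ) / N then (1:ℝ) else 0) := by positivity
        linarith
    · have h2 : (0:ℝ) ≤ (if t * a < ((I.filter fun i => x i = true).card : ℝ)
            - a * (K : ℝ) / N then (1:ℝ) else 0) := by positivity
      have h3 : (0:ℝ) ≤ (if t * a < ((I.filter fun i => y i = true).card : ℝ)
            - a * (Ky : ℝ) / N then (1:ℝ) else 0) := by positivity
      linarith
  -- assemble
  have h1 := tail_count x (Finset.univ : Finset (Fin N)) a haN' t ht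
  have h2 := tail_count y (Finset.univ : Finset (Fin N)) a haN' t ht
  rw [hcardU] at h1 h2
  have hsum := sum_le_sum hpoint
  rw [Finset.sum_add_distrib] at hsum
  have htot : ∑ It ∈ Finset.powersetCard a (Finset.univ : Finset (Fin N)),
        (if δ < |relHamming x It - relHamming x Itᶜ| then (1 : ℝ) else 0)
      ≤ 2 * ((N.choose a : ℝ) * Real.exp (-2 * a * t ^ 2)) := by
    calc _ ≤ _ := hsum
      _ ≤ (N.choose a : ℝ) * Real.exp (-2 * a * t ^ 2)
            + (N.choose a : ℝ) * Real.exp (-2 * a * t ^ 2) := add_le_add h1 h2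
      _ = 2 * ((N.choose a : ℝ) * Real.exp (-2 * a * t ^ 2)) := by ring
  have hC : (0:ℝ) < (N.choose a : ℝ) := by exact_mod_cast Nat.choose_pos haN.le
  have hexp_eq : -2 * (a:ℝ) * t ^ 2 = -2 * α * (1 - α)^2 * N * δ^2 := by
    rw [ha, htdef]; ring
  rw [Finset.card_powersetCard, hcardU]
  calc ((N.choose a : ℝ))⁻¹ * ∑ It ∈ Finset.powersetCard a (Finset.univ : Finset (Fin N)),
        (if δ < |relHamming x It - relHamming x Itᶜ| then (1 : ℝ) else 0)
      ≤ ((N.choose a : ℝ))⁻¹ * (2 * ((N.choose a : ℝ) * Real.exp (-2 * a * t ^ 2))) :=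
        mul_le_mul_of_nonneg_left htot (inv_nonneg.2 hC.le)
    _ = 2 * Real.exp (-2 * a * t ^ 2) := by field_simp
    _ = 2 * Real.exp (-2 * α * (1 - α)^2 * N * δ^2) := by rw [hexp_eq]
end

section
/- Let N be a positive integer, let 0 < α < 1/2 with αN an integer, let δ > 0, let x : {1,…,N} → {0,1} be a fixed binary string, and let n be a fixed integer with 1 ≤ n ≤ αN. Sample I_t uniformly among subsets of {1,…,N} of size αN, and, given I_t, sample I_s uniformly among subsets of I_t of size n. Then the probability that |r_H(x|_{I_s}) − r_H(x|_{\bar{I_t}})| > δ (where \bar{I_t} is the complement of I_t in {1,…,N}) is at most 2·e^{−(1/2)·n·δ²} + 2·e^{−(1/2)·α·(1−α)²·N·δ²}. -/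
open Finset

lemma count_supersets {α : Type*} [DecidableEq α] (U J : Finset α) (hJU : J ⊆ U)
    (n : ℕ) (hj : J.card ≤ n) :
    ((Finset.powersetCard n U).filter (fun S => J ⊆ S)).card
      = (U.card - J.card).choose (n - J.card) := by
  rw [← Finset.card_sdiff_of_subset hJU, ← Finset.card_powersetCard]
  apply Finset.card_bij' (fun S _ => S \ J) (fun T _ => T ∪ J)
  · intro S hS
    simp only [Finset.mem_filter, Finset.mem_powersetCard] at hS
    obtain ⟨⟨hSU, hScard⟩, hJS⟩ := hS
    rw [Finset.mem_powersetCard]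
    constructor
    · exact Finset.sdiff_subset_sdiff hSU le_rfl
    · rw [Finset.card_sdiff_of_subset hJS, hScard]
  · intro T hT
    rw [Finset.mem_powersetCard] at hT
    obtain ⟨hTU, hTcard⟩ := hT
    have hdisj : Disjoint T J := Finset.disjoint_of_subset_left hTU disjoint_sdiff_self_left
    simp only [Finset.mem_filter, Finset.mem_powersetCard]
    refine ⟨⟨?_, ?_⟩, Finset.subset_union_right⟩
    · exact Finset.union_subset (hTU.trans Finset.sdiff_subset) hJU
    · rw [Finset.card_union_of_disjoint hdisj, hTcard]
      omega
  · intro S hS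
    simp only [Finset.mem_filter] at hS
    exact Finset.sdiff_union_of_subset hS.2
  · intro T hT
    rw [Finset.mem_powersetCard] at hT
    have hdisj : Disjoint T J := Finset.disjoint_of_subset_left hT.1 disjoint_sdiff_self_left
    exact Finset.union_sdiff_cancel_right hdisj

lemma sum_choose_inter {α : Type*} [DecidableEq α] (U A : Finset α) (hAU : A ⊆ U)
    (n j : ℕ) (hj : j ≤ n) :
    ∑ S ∈ Finset.powersetCard n U, ((S ∩ A).card.choose j)
      = A.card.choose j * (U.card - j).choose (n - j) := by
  have key : ∀ S ∈ Finset.powersetCard n U,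
      (S ∩ A).card.choose j
        = ∑ J ∈ Finset.powersetCard j A, (if J ⊆ S then 1 else 0) := by
    intro S hS
    rw [← Finset.sum_filter, Finset.sum_const, smul_eq_mul, mul_one,
      ← Finset.card_powersetCard]
    congr 1
    ext J
    simp only [Finset.mem_powersetCard, Finset.mem_filter, Finset.subset_inter_iff]
    tauto
  rw [Finset.sum_congr rfl key, Finset.sum_comm]
  have key2 : ∀ J ∈ Finset.powersetCard j A,
      (∑ S ∈ Finset.powersetCard n U, (if J ⊆ S then 1 else 0))
        = (U.card - j).choose (n - j) := by
    intro J hJ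
    rw [Finset.mem_powersetCard] at hJ
    rw [← Finset.sum_filter, Finset.sum_const, smul_eq_mul, mul_one,
      count_supersets U J (hJ.1.trans hAU) n (hJ.2 ▸ hj), hJ.2]
  rw [Finset.sum_congr rfl key2, Finset.sum_const, smul_eq_mul, Finset.card_powersetCard]

lemma choose_ratio_le (M N j : ℕ) (hMN : M ≤ N) :
    M.choose j * N ^ j ≤ N.choose j * M ^ j := by
  induction j with
  | zero => simp
  | succ j ih =>
    rcases le_or_gt (j + 1) M with hjM | hjM
    · have hL := Nat.choose_succ_right_eq M j
      have hR := Nat.choose_succ_right_eq N j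
      have key : (M - j) * N ≤ (N - j) * M := by
        have hjM' : j ≤ M := by omega
        have hjN : j ≤ N := hjM'.trans hMN
        calc (M - j) * N = M * N - j * N := by rw [Nat.sub_mul]
        _ ≤ M * N - j * M := by
            apply Nat.sub_le_sub_left; exact Nat.mul_le_mul_left j hMN
        _ = (N - j) * M := by rw [Nat.sub_mul]; ring_nf
      refine Nat.le_of_mul_le_mul_left ?_ (Nat.succ_pos j)
      calc (j+1) * (M.choose (j+1) * N ^ (j+1))
          = (M.choose j * (M - j)) * (N ^ j * N) := by
            rw [← hL]; ring
        _ = (M.choose j * N ^ j) * ((M - j) * N) := by ring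
        _ ≤ (N.choose j * M ^ j) * ((N - j) * M) := Nat.mul_le_mul ih key
        _ = (N.choose j * (N - j)) * (M ^ j * M) := by ring
        _ = (j+1) * (N.choose (j+1) * M ^ (j+1)) := by rw [← hR]; ring
    · rw [Nat.choose_eq_zero_of_lt hjM]
      simp

lemma sum_pow_inter_le {α : Type*} [DecidableEq α] (U A : Finset α) (hAU : A ⊆ U)
    (n : ℕ) (hn : n ≤ U.card) (hU : 0 < U.card) (t : ℝ) (ht : 0 ≤ t) :
    ∑ S ∈ Finset.powersetCard n U, (1 + t) ^ (S ∩ A).card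
      ≤ (U.card.choose n : ℝ) * (1 + ((A.card : ℝ) / (U.card : ℝ)) * t) ^ n := by
  set N := U.card
  set M := A.card
  set p : ℝ := (M : ℝ) / (N : ℝ) with hp
  have hNpos : (0:ℝ) < N := by exact_mod_cast hU
  -- expand each (1+t)^k as a sum over range (n+1)
  have expand : ∀ S ∈ Finset.powersetCard n U,
      (1 + t) ^ (S ∩ A).card
        = ∑ j ∈ Finset.range (n + 1), ((S ∩ A).card.choose j : ℝ) * t ^ j := by
    intro S hS
    rw [Finset.mem_powersetCard] at hS
    have hk : (S ∩ A).card ≤ n := by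
      calc (S ∩ A).card ≤ S.card := Finset.card_le_card Finset.inter_subset_left
      _ = n := hS.2
    rw [add_comm (1:ℝ) t, add_pow]
    rw [← Finset.sum_subset (Finset.range_subset_range.mpr (by omega :
        (S ∩ A).card + 1 ≤ n + 1))]
    · apply Finset.sum_congr rfl
      intro j hj
      simp only [one_pow, mul_one]
      ring
    · intro j _ hj
      simp only [Finset.mem_range, not_lt] at hj
      rw [Nat.choose_eq_zero_of_lt (by omega)]
      simp
  rw [Finset.sum_congr rfl expand, Finset.sum_comm]
  -- RHS expansion
  have rhs : (↑(N.choose n) : ℝ) * (1 + p * t) ^ n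
      = ∑ j ∈ Finset.range (n + 1), (N.choose n : ℝ) * ((n.choose j : ℝ) * (p * t) ^ j) := by
    rw [add_comm (1:ℝ) (p*t), add_pow, Finset.mul_sum]
    apply Finset.sum_congr rfl
    intro j hj
    simp only [one_pow, mul_one]
    ring
  rw [rhs]
  apply Finset.sum_le_sum
  intro j hj
  simp only [Finset.mem_range] at hj
  have hjn : j ≤ n := by omega
  -- inner sum over S of choose
  have hsum : ∑ S ∈ Finset.powersetCard n U, ((S ∩ A).card.choose j : ℝ) * t ^ j
      = ((M.choose j * (N - j).choose (n - j) : ℕ) : ℝ) * t ^ j := by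
    rw [← Finset.sum_mul]
    congr 1
    rw [← Nat.cast_sum]
    congr 1
    exact sum_choose_inter U A hAU n j hjn
  rw [hsum]
  have hkey : ((M.choose j * (N - j).choose (n - j) : ℕ) : ℝ)
      ≤ (N.choose n : ℝ) * ((n.choose j : ℝ) * p ^ j) := by
    have hid : N.choose n * n.choose j = N.choose j * (N - j).choose (n - j) :=
      Nat.choose_mul hjn
    have hC : (M.choose j : ℝ) * (N:ℝ) ^ j ≤ (N.choose j : ℝ) * (M:ℝ) ^ j := by
      exact_mod_cast choose_ratio_le M N j (Finset.card_le_card hAU)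
    have hpj : (M.choose j : ℝ) ≤ (N.choose j : ℝ) * p ^ j := by
      rw [hp, div_pow, ← mul_div_assoc]
      rw [le_div_iff₀ (by positivity)]
      calc (M.choose j : ℝ) * (N:ℝ)^j ≤ (N.choose j : ℝ) * (M:ℝ)^j := hC
      _ = (N.choose j:ℝ) * (M:ℝ)^j := rfl
    push_cast
    calc (M.choose j : ℝ) * ((N - j).choose (n - j) : ℝ)
        ≤ (N.choose j : ℝ) * p ^ j * ((N - j).choose (n - j) : ℝ) := by
          apply mul_le_mul_of_nonneg_right hpj (by positivity)
      _ = ((N.choose j * (N - j).choose (n-j) : ℕ) : ℝ) * p ^ j := by push_cast; ring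
      _ = ((N.choose n * n.choose j : ℕ) : ℝ) * p ^ j := by rw [hid]
      _ = (N.choose n : ℝ) * ((n.choose j : ℝ) * p ^ j) := by push_cast; ring
  calc ((M.choose j * (N - j).choose (n - j) : ℕ) : ℝ) * t ^ j
      ≤ ((N.choose n : ℝ) * ((n.choose j : ℝ) * p ^ j)) * t ^ j := by
        apply mul_le_mul_of_nonneg_right hkey (by positivity)
    _ = (N.choose n : ℝ) * ((n.choose j : ℝ) * (p * t) ^ j) := by rw [mul_pow]; ring

lemma hoeff_scalar (p : ℝ) (hp0 : 0 ≤ p) (hp1 : p ≤ 1) (l : ℝ) (hl : 0 ≤ l) :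
    1 - p + p * Real.exp l ≤ Real.exp (p * l + l ^ 2 / 8) := by
  have hpos : ∀ y : ℝ, 0 < 1 - p + p * Real.exp y := by
    intro y
    rcases eq_or_lt_of_le hp1 with h | h
    · subst h; simpa using Real.exp_pos y
    · have : 0 ≤ p * Real.exp y := mul_nonneg hp0 (Real.exp_pos y).le
      linarith
  set f1 : ℝ → ℝ := fun z => p + z / 4 - p * Real.exp z / (1 - p + p * Real.exp z) with hf1
  set f : ℝ → ℝ := fun z => p * z + z ^ 2 / 8 - Real.log (1 - p + p * Real.exp z) with hf
  have hden : ∀ y : ℝ, HasDerivAt (fun z => 1 - p + p * Real.exp z) (p * Real.exp y) y := by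
    intro y
    exact ((Real.hasDerivAt_exp y).const_mul p).const_add (1 - p)
  have hder_f1 : ∀ y : ℝ, HasDerivAt f1
      (1/4 - p * Real.exp y * (1 - p) / (1 - p + p * Real.exp y) ^ 2) y := by
    intro y
    have hnum : HasDerivAt (fun z => p * Real.exp z) (p * Real.exp y) y :=
      (Real.hasDerivAt_exp y).const_mul p
    have hdiv := hnum.div (hden y) (ne_of_gt (hpos y))
    have heq : (p * Real.exp y * (1 - p + p * Real.exp y)
        - p * Real.exp y * (p * Real.exp y)) / (1 - p + p * Real.exp y) ^ 2
        = p * Real.exp y * (1 - p) / (1 - p + p * Real.exp y) ^ 2 := by ring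
    rw [heq] at hdiv
    have hq : HasDerivAt (fun z : ℝ => p + z / 4) (1/4) y := by
      simpa using ((hasDerivAt_id y).div_const 4).const_add p
    exact hq.sub hdiv
  have hder_f : ∀ y : ℝ, HasDerivAt f (f1 y) y := by
    intro y
    have hlog : HasDerivAt (fun z => Real.log (1 - p + p * Real.exp z))
        (p * Real.exp y / (1 - p + p * Real.exp y)) y :=
      (hden y).log (ne_of_gt (hpos y))
    have hq : HasDerivAt (fun z : ℝ => p * z + z ^ 2 / 8) (p + y / 4) y := by
      have h1 : HasDerivAt (fun z : ℝ => p * z) p y := by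
        simpa using (hasDerivAt_id y).const_mul p
      have h2 : HasDerivAt (fun z : ℝ => z ^ 2 / 8) (y / 4) y := by
        have := ((hasDerivAt_pow 2 y).div_const 8)
        refine this.congr_deriv ?_
        ring
      exact h1.add h2
    have := hq.sub hlog
    exact this
  have hf1nonneg : ∀ y : ℝ, 0 ≤ y → 0 ≤ f1 y := by
    intro y hy
    have hmono : Monotone f1 := by
      apply monotone_of_deriv_nonneg
      · intro z; exact (hder_f1 z).differentiableAt
      · intro z
        rw [(hder_f1 z).deriv]
        have h2 : (0:ℝ) < (1 - p + p * Real.exp z) ^ 2 := pow_pos (hpos z) 2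
        rw [sub_nonneg, div_le_iff₀ h2]
        nlinarith [sq_nonneg ((1 - p) - p * Real.exp z), mul_nonneg hp0 (Real.exp_pos z).le]
    have h0 : f1 0 = 0 := by
      simp [hf1, Real.exp_zero]
    linarith [hmono hy, h0.ge]
  have hfmono : MonotoneOn f (Set.Ici (0:ℝ)) := by
    apply monotoneOn_of_deriv_nonneg (convex_Ici 0)
    · exact (Continuous.continuousOn (by
        have : Differentiable ℝ f := fun z => (hder_f z).differentiableAt
        exact this.continuous))
    · intro z _
      exact (hder_f z).differentiableAt.differentiableWithinAt
    · intro z hz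
      rw [interior_Ici] at hz
      rw [(hder_f z).deriv]
      exact hf1nonneg z (le_of_lt hz)
  have hf0 : f 0 = 0 := by simp [hf]
  have hfl : 0 ≤ f l := by
    have := hfmono (Set.mem_Ici.mpr le_rfl) (Set.mem_Ici.mpr hl) hl
    linarith [hf0.ge]
  have hlog_le : Real.log (1 - p + p * Real.exp l) ≤ p * l + l ^ 2 / 8 := by
    rw [hf] at hfl; dsimp at hfl; linarith
  calc 1 - p + p * Real.exp l
      = Real.exp (Real.log (1 - p + p * Real.exp l)) := (Real.exp_log (hpos l)).symm
    _ ≤ Real.exp (p * l + l ^ 2 / 8) := Real.exp_le_exp.mpr hlog_le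
lemma chernoff_upper {α : Type*} [DecidableEq α] (U A : Finset α) (hAU : A ⊆ U)
    (n : ℕ) (hn : n ≤ U.card) (hU : 0 < U.card) (t : ℝ) (ht : 0 < t) :
    ∑ S ∈ Finset.powersetCard n U,
        (if (n : ℝ) * ((A.card : ℝ) / (U.card : ℝ) + t) ≤ ((S ∩ A).card : ℝ)
          then (1:ℝ) else 0)
      ≤ (U.card.choose n : ℝ) * Real.exp (-2 * n * t ^ 2) := by
  set N := U.card
  set M := A.card
  set p : ℝ := (M : ℝ) / (N : ℝ) with hp
  have hp0 : 0 ≤ p := by positivity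
  have hp1 : p ≤ 1 := by
    rw [hp, div_le_one (by exact_mod_cast hU)]
    exact_mod_cast Finset.card_le_card hAU
  have hl : (0:ℝ) ≤ 4 * t := by linarith
  have hexp1 : (1:ℝ) ≤ Real.exp (4 * t) := Real.one_le_exp hl
  -- pointwise bound
  have step1 : ∀ S ∈ Finset.powersetCard n U,
      (if (n : ℝ) * (p + t) ≤ ((S ∩ A).card : ℝ) then (1:ℝ) else 0)
        ≤ Real.exp (-(4 * t) * (n * (p + t))) * (Real.exp (4 * t)) ^ (S ∩ A).card := by
    intro S _
    have heq : Real.exp (-(4 * t) * (n * (p + t))) * (Real.exp (4 * t)) ^ (S ∩ A).card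
        = Real.exp ((4 * t) * (((S ∩ A).card : ℝ) - n * (p + t))) := by
      rw [← Real.exp_nat_mul, ← Real.exp_add]
      congr 1
      ring
    rw [heq]
    split_ifs with h
    · apply Real.one_le_exp
      nlinarith
    · positivity
  calc ∑ S ∈ Finset.powersetCard n U,
        (if (n : ℝ) * (p + t) ≤ ((S ∩ A).card : ℝ) then (1:ℝ) else 0)
      ≤ ∑ S ∈ Finset.powersetCard n U,
          Real.exp (-(4 * t) * (n * (p + t))) * (Real.exp (4 * t)) ^ (S ∩ A).card :=
        Finset.sum_le_sum step1
    _ = Real.exp (-(4 * t) * (n * (p + t))) *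
          ∑ S ∈ Finset.powersetCard n U, (1 + (Real.exp (4 * t) - 1)) ^ (S ∩ A).card := by
        rw [Finset.mul_sum]
        apply Finset.sum_congr rfl
        intro S _
        congr 2
        ring
    _ ≤ Real.exp (-(4 * t) * (n * (p + t))) *
          ((N.choose n : ℝ) * (1 + p * (Real.exp (4 * t) - 1)) ^ n) := by
        apply mul_le_mul_of_nonneg_left _ (Real.exp_pos _).le
        exact sum_pow_inter_le U A hAU n hn hU (Real.exp (4 * t) - 1) (by linarith)
    _ ≤ Real.exp (-(4 * t) * (n * (p + t))) *
          ((N.choose n : ℝ) * (Real.exp (p * (4 * t) + (4 * t) ^ 2 / 8)) ^ n) := by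
        apply mul_le_mul_of_nonneg_left _ (Real.exp_pos _).le
        apply mul_le_mul_of_nonneg_left _ (by positivity)
        apply pow_le_pow_left₀
        · nlinarith
        · have := hoeff_scalar p hp0 hp1 (4 * t) hl
          linarith
    _ = (N.choose n : ℝ) * Real.exp (-2 * n * t ^ 2) := by
        rw [← Real.exp_nat_mul]
        rw [show Real.exp (-(4 * t) * (↑n * (p + t))) *
            ((N.choose n : ℝ) * Real.exp (↑n * (p * (4 * t) + (4 * t) ^ 2 / 8)))
          = (N.choose n : ℝ) * (Real.exp (↑n * (p * (4 * t) + (4 * t) ^ 2 / 8)) *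
            Real.exp (-(4 * t) * (↑n * (p + t)))) from by ring, ← Real.exp_add]
        congr 2
        ring

lemma chernoff_two_sided {α : Type*} [DecidableEq α] (U A : Finset α) (hAU : A ⊆ U)
    (n : ℕ) (hn1 : 1 ≤ n) (hn : n ≤ U.card) (t : ℝ) (ht : 0 < t) :
    ∑ S ∈ Finset.powersetCard n U,
        (if t < |((S ∩ A).card : ℝ) / (n : ℝ) - (A.card : ℝ) / (U.card : ℝ)|
          then (1:ℝ) else 0)
      ≤ 2 * (U.card.choose n : ℝ) * Real.exp (-2 * n * t ^ 2) := by
  have hU : 0 < U.card := lt_of_lt_of_le hn1 hn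
  have hn0 : (0:ℝ) < (n : ℝ) := by exact_mod_cast hn1
  have hN0 : (0:ℝ) < (U.card : ℝ) := by exact_mod_cast hU
  have hMN : A.card ≤ U.card := Finset.card_le_card hAU
  have hA'U : U \ A ⊆ U := Finset.sdiff_subset
  have hp' : ((U \ A).card : ℝ) / (U.card : ℝ) = 1 - (A.card : ℝ) / (U.card : ℝ) := by
    rw [Finset.card_sdiff_of_subset hAU, Nat.cast_sub hMN]
    field_simp
  have hsplit : ∀ S ∈ Finset.powersetCard n U,
      (if t < |((S ∩ A).card : ℝ) / (n : ℝ) - (A.card : ℝ) / (U.card : ℝ)|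
        then (1:ℝ) else 0)
      ≤ (if (n : ℝ) * ((A.card : ℝ) / (U.card : ℝ) + t) ≤ ((S ∩ A).card : ℝ)
          then (1:ℝ) else 0)
        + (if (n : ℝ) * (((U \ A).card : ℝ) / (U.card : ℝ) + t) ≤ ((S ∩ (U \ A)).card : ℝ)
          then (1:ℝ) else 0) := by
    intro S hS
    rw [Finset.mem_powersetCard] at hS
    have hkk' : (S ∩ A).card + (S ∩ (U \ A)).card = n := by
      rw [← hS.2, ← Finset.card_union_of_disjoint]
      · congr 1
        rw [← Finset.inter_union_distrib_left, Finset.union_sdiff_of_subset hAU]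
        exact (Finset.inter_eq_left.mpr hS.1)
      · exact Finset.disjoint_of_subset_left Finset.inter_subset_right
          (Finset.disjoint_of_subset_right Finset.inter_subset_right disjoint_sdiff_self_right)
    set k : ℝ := ((S ∩ A).card : ℝ) with hk
    set k' : ℝ := ((S ∩ (U \ A)).card : ℝ) with hkdef
    set p : ℝ := (A.card : ℝ) / (U.card : ℝ) with hpdef
    have hk' : k' = (n : ℝ) - k := by
      have : k + k' = (n : ℝ) := by
        rw [hk, hkdef]; exact_mod_cast hkk'
      linarith
    have hzn : (k / n) * n = k := div_mul_cancel₀ k (ne_of_gt hn0)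
    have key : t < |k / n - p| →
        ((n:ℝ) * (p + t) ≤ k ∨ (n:ℝ) * (((U \ A).card : ℝ) / (U.card : ℝ) + t) ≤ k') := by
      intro h
      rcases lt_abs.mp h with hc | hc
      · left
        have := mul_lt_mul_of_pos_right hc hn0
        nlinarith
      · right
        rw [hp']
        have := mul_lt_mul_of_pos_right hc hn0
        nlinarith
    by_cases h : t < |k / n - p|
    · rw [if_pos h]
      rcases key h with hc | hc
      · rw [if_pos hc]
        have h2 : (0:ℝ) ≤ (if (n : ℝ) * (((U \ A).card : ℝ) / (U.card : ℝ) + t) ≤ k'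
            then (1:ℝ) else 0) := by positivity
        linarith
      · rw [if_pos hc]
        have h2 : (0:ℝ) ≤ (if (n : ℝ) * (p + t) ≤ k then (1:ℝ) else 0) := by positivity
        linarith
    · rw [if_neg h]
      positivity
  calc ∑ S ∈ Finset.powersetCard n U,
      (if t < |((S ∩ A).card : ℝ) / (n : ℝ) - (A.card : ℝ) / (U.card : ℝ)|
        then (1:ℝ) else 0)
      ≤ ∑ S ∈ Finset.powersetCard n U,
        ((if (n : ℝ) * ((A.card : ℝ) / (U.card : ℝ) + t) ≤ ((S ∩ A).card : ℝ)
          then (1:ℝ) else 0)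
        + (if (n : ℝ) * (((U \ A).card : ℝ) / (U.card : ℝ) + t) ≤ ((S ∩ (U \ A)).card : ℝ)
          then (1:ℝ) else 0)) := Finset.sum_le_sum hsplit
    _ = (∑ S ∈ Finset.powersetCard n U,
          (if (n : ℝ) * ((A.card : ℝ) / (U.card : ℝ) + t) ≤ ((S ∩ A).card : ℝ)
            then (1:ℝ) else 0))
        + ∑ S ∈ Finset.powersetCard n U,
          (if (n : ℝ) * (((U \ A).card : ℝ) / (U.card : ℝ) + t) ≤ ((S ∩ (U \ A)).card : ℝ)
            then (1:ℝ) else 0) := Finset.sum_add_distrib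
    _ ≤ (U.card.choose n : ℝ) * Real.exp (-2 * n * t ^ 2)
        + (U.card.choose n : ℝ) * Real.exp (-2 * n * t ^ 2) :=
        add_le_add (chernoff_upper U A hAU n hn hU t ht)
          (chernoff_upper U (U \ A) hA'U n hn hU t ht)
    _ = 2 * (U.card.choose n : ℝ) * Real.exp (-2 * n * t ^ 2) := by ring

lemma filter_eq_inter_filter {N : ℕ} (x : Fin N → Bool) (S T : Finset (Fin N)) (hST : S ⊆ T) :
    S.filter (fun i => x i = true) = S ∩ (T.filter (fun i => x i = true)) := by
  ext i
  simp only [Finset.mem_filter, Finset.mem_inter]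
  exact ⟨fun h => ⟨h.1, hST h.1, h.2⟩, fun h => ⟨h.1, h.2.2⟩⟩


/-- Hoeffding-type inequality for sampling without replacement with a fixed
sub-sample size: sample `I_t` uniformly among subsets of `{1,…,N}` of size `αN`,
then sample `I_s` uniformly among subsets of `I_t` of size `n` (with `1 ≤ n ≤ αN`).
The probability that `|r_H(x|_{I_s}) − r_H(x|_{\bar I_t})| > δ` is at most
`2·e^{−n·δ²/2} + 2·e^{−α(1−α)²Nδ²/2}`. -/
theorem hoeffding_subsample_fixed (N : ℕ) (hN : 0 < N) (α δ : ℝ)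
    (hα0 : 0 < α) (hα : α < 1/2) (hδ : 0 < δ)
    (a : ℕ) (ha : (a : ℝ) = α * N) (x : Fin N → Bool)
    (n : ℕ) (hn1 : 1 ≤ n) (hn2 : n ≤ a) :
    ((Finset.powersetCard a (Finset.univ : Finset (Fin N))).card : ℝ)⁻¹ *
      ∑ It ∈ Finset.powersetCard a (Finset.univ : Finset (Fin N)),
        (((Finset.powersetCard n It).card : ℝ)⁻¹ *
          ∑ Is ∈ Finset.powersetCard n It,
            (if δ < |relHamming x Is - relHamming x Itᶜ| then (1 : ℝ) else 0))
    ≤ 2 * Real.exp (-(1/2) * n * δ^2)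
      + 2 * Real.exp (-(1/2) * α * (1 - α)^2 * N * δ^2) := by
  classical
  set A : Finset (Fin N) := Finset.univ.filter (fun i => x i = true) with hA
  have hNR : (0:ℝ) < N := by exact_mod_cast hN
  have haN : a < N := by
    have h1 : (a:ℝ) < N := by rw [ha]; nlinarith
    exact_mod_cast h1
  have haN' : a ≤ N := le_of_lt haN
  have haR : (0:ℝ) < a := by
    have : 0 < a := lt_of_lt_of_le hn1 hn2
    exact_mod_cast this
  have hNaR : (0:ℝ) < (N:ℝ) - a := by
    have : (a:ℝ) < N := by exact_mod_cast haN
    linarith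
  have hcard_univ : (Finset.univ : Finset (Fin N)).card = N := by simp
  have hP : ((Finset.powersetCard a (Finset.univ : Finset (Fin N))).card : ℝ)
      = (N.choose a : ℝ) := by
    rw [Finset.card_powersetCard, hcard_univ]
  have hCP : (0:ℝ) < (N.choose a : ℝ) := by exact_mod_cast Nat.choose_pos haN'
  set Ein := 2 * Real.exp (-(1/2) * n * δ^2) with hEin
  set ind2 : Finset (Fin N) → ℝ :=
    fun It => if δ/2 < |relHamming x It - relHamming x Itᶜ| then 1 else 0 with hind2
  set t2 : ℝ := (1 - α) * (δ/2) with ht2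
  have ht2pos : 0 < t2 := by
    rw [ht2]
    have : 0 < 1 - α := by linarith
    positivity
  -- Step 1 : inner conditional bound
  have step1 : ∀ It ∈ Finset.powersetCard a (Finset.univ : Finset (Fin N)),
      ((Finset.powersetCard n It).card : ℝ)⁻¹ *
        ∑ Is ∈ Finset.powersetCard n It,
          (if δ < |relHamming x Is - relHamming x Itᶜ| then (1:ℝ) else 0)
      ≤ Ein + ind2 It := by
    intro It hIt
    rw [Finset.mem_powersetCard] at hIt
    have hItc : It.card = a := hIt.2
    have hceq : ((Finset.powersetCard n It).card : ℝ) = (It.card.choose n : ℝ) := by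
      rw [Finset.card_powersetCard]
    have hcpos : (0:ℝ) < ((Finset.powersetCard n It).card : ℝ) := by
      rw [hceq, hItc]
      exact_mod_cast Nat.choose_pos hn2
    have hind2nonneg : (0:ℝ) ≤ ind2 It := by
      rw [hind2]
      dsimp only
      split_ifs <;> norm_num
    -- pointwise triangle inequality
    have hpt : ∀ Is ∈ Finset.powersetCard n It,
        (if δ < |relHamming x Is - relHamming x Itᶜ| then (1:ℝ) else 0)
        ≤ (if δ/2 < |relHamming x Is - relHamming x It| then (1:ℝ) else 0) + ind2 It := by
      intro Is _
      by_cases h : δ < |relHamming x Is - relHamming x Itᶜ|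
      · rw [if_pos h]
        have htri : |relHamming x Is - relHamming x Itᶜ| ≤
            |relHamming x Is - relHamming x It| + |relHamming x It - relHamming x Itᶜ| :=
          abs_sub_le _ _ _
        by_cases h1 : δ/2 < |relHamming x Is - relHamming x It|
        · rw [if_pos h1]
          linarith
        · push_neg at h1
          have h2 : δ/2 < |relHamming x It - relHamming x Itᶜ| := by linarith
          have : ind2 It = 1 := by rw [hind2]; exact if_pos h2
          rw [this]
          split_ifs <;> norm_num
      · rw [if_neg h]
        have : (0:ℝ) ≤ (if δ/2 < |relHamming x Is - relHamming x It| then (1:ℝ) else 0) := by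
          split_ifs <;> norm_num
        linarith
    -- inner Chernoff bound
    have hsum1 : ∑ Is ∈ Finset.powersetCard n It,
        (if δ/2 < |relHamming x Is - relHamming x It| then (1:ℝ) else 0)
        ≤ 2 * (It.card.choose n : ℝ) * Real.exp (-2 * n * (δ/2)^2) := by
      have hcongr : ∀ Is ∈ Finset.powersetCard n It,
          (if δ/2 < |relHamming x Is - relHamming x It| then (1:ℝ) else 0)
          = (if δ/2 < |((Is ∩ (It.filter fun i => x i = true)).card : ℝ)/(n:ℝ)
              - ((It.filter fun i => x i = true).card : ℝ)/(It.card : ℝ)|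
              then (1:ℝ) else 0) := by
        intro Is hIs
        rw [Finset.mem_powersetCard] at hIs
        have h1 : relHamming x Is
            = ((Is ∩ (It.filter fun i => x i = true)).card : ℝ)/(n:ℝ) := by
          rw [relHamming, ← filter_eq_inter_filter x Is It hIs.1, hIs.2]
        have h2 : relHamming x It
            = ((It.filter fun i => x i = true).card : ℝ)/(It.card : ℝ) := rfl
        rw [h1, h2]
      rw [Finset.sum_congr rfl hcongr]
      exact chernoff_two_sided It (It.filter fun i => x i = true)
        (Finset.filter_subset _ _) n hn1 (by rw [hItc]; exact hn2) (δ/2) (by linarith)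
    have hexpeq : Real.exp (-2 * n * (δ/2)^2) = Real.exp (-(1/2) * n * δ^2) := by
      congr 1
      ring
    calc ((Finset.powersetCard n It).card : ℝ)⁻¹ *
          ∑ Is ∈ Finset.powersetCard n It,
            (if δ < |relHamming x Is - relHamming x Itᶜ| then (1:ℝ) else 0)
        ≤ ((Finset.powersetCard n It).card : ℝ)⁻¹ *
          ∑ Is ∈ Finset.powersetCard n It,
            ((if δ/2 < |relHamming x Is - relHamming x It| then (1:ℝ) else 0) + ind2 It) := by
          apply mul_le_mul_of_nonneg_left (Finset.sum_le_sum hpt) (inv_nonneg.mpr hcpos.le)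
      _ = ((Finset.powersetCard n It).card : ℝ)⁻¹ *
          ((∑ Is ∈ Finset.powersetCard n It,
            (if δ/2 < |relHamming x Is - relHamming x It| then (1:ℝ) else 0))
            + ((Finset.powersetCard n It).card : ℝ) * ind2 It) := by
          rw [Finset.sum_add_distrib, Finset.sum_const, nsmul_eq_mul]
      _ ≤ ((Finset.powersetCard n It).card : ℝ)⁻¹ *
          ((2 * ((Finset.powersetCard n It).card : ℝ) * Real.exp (-(1/2) * n * δ^2))
            + ((Finset.powersetCard n It).card : ℝ) * ind2 It) := by
          apply mul_le_mul_of_nonneg_left _ (inv_nonneg.mpr hcpos.le)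
          apply add_le_add_left
          rw [← hexpeq, hceq]
          exact hsum1
      _ = Ein + ind2 It := by
          rw [hEin]
          have hcne : ((Finset.powersetCard n It).card : ℝ) ≠ 0 := ne_of_gt hcpos
          have hcne2 : ((It.card.choose n : ℕ) : ℝ) ≠ 0 := by
            rw [← hceq]; exact hcne
          field_simp
  -- Step 2 : outer bound on ind2
  have step2 : ∀ It ∈ Finset.powersetCard a (Finset.univ : Finset (Fin N)),
      ind2 It ≤ (if t2 < |((It ∩ A).card : ℝ)/(a:ℝ)
          - ((A.card : ℝ)/((Finset.univ : Finset (Fin N)).card : ℝ))| then (1:ℝ) else 0) := by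
    intro It hIt
    rw [Finset.mem_powersetCard] at hIt
    have hItc : It.card = a := hIt.2
    rw [hind2]
    dsimp only
    by_cases h : δ/2 < |relHamming x It - relHamming x Itᶜ|
    · rw [if_pos h]
      -- show the outer condition holds
      have hkc : (It ∩ A).card + (Itᶜ ∩ A).card = A.card := by
        have hcompl : Itᶜ ∩ A = A \ It := by
          ext i
          simp only [Finset.mem_inter, Finset.mem_compl, Finset.mem_sdiff]
          tauto
        rw [hcompl, Finset.inter_comm]
        exact Finset.card_inter_add_card_sdiff A It
      have hcompl_card : (Itᶜ.card : ℝ) = (N:ℝ) - a := by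
        rw [Finset.card_compl, hItc]
        have : a ≤ Fintype.card (Fin N) := by simpa using haN'
        rw [Nat.cast_sub this]
        simp
      have hrt : relHamming x It = ((It ∩ A).card : ℝ)/(a:ℝ) := by
        rw [relHamming, filter_eq_inter_filter x It Finset.univ (Finset.subset_univ It),
          ← hA, hItc]
      have hrc : relHamming x Itᶜ = ((A.card : ℝ) - ((It ∩ A).card : ℝ))/((N:ℝ) - a) := by
        rw [relHamming, filter_eq_inter_filter x Itᶜ Finset.univ (Finset.subset_univ Itᶜ),
          ← hA, hcompl_card]
        congr 1
        have : ((It ∩ A).card : ℝ) + ((Itᶜ ∩ A).card : ℝ) = (A.card : ℝ) := by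
          exact_mod_cast hkc
        linarith
      have hkey : relHamming x It - relHamming x Itᶜ
          = (((It ∩ A).card : ℝ)/(a:ℝ) - (A.card : ℝ)/(N:ℝ)) * ((N:ℝ)/((N:ℝ) - a)) := by
        rw [hrt, hrc]
        field_simp
        ring
      rw [hkey, abs_mul, abs_of_pos (by positivity : (0:ℝ) < (N:ℝ)/((N:ℝ) - a))] at h
      have hfrac : ((N:ℝ)/((N:ℝ) - a)) * (((N:ℝ) - a)/(N:ℝ)) = 1 := by
        field_simp
      have h1α : 1 - α = ((N:ℝ) - a)/(N:ℝ) := by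
        rw [ha]
        field_simp
      have hcond : t2 < |((It ∩ A).card : ℝ)/(a:ℝ) - (A.card : ℝ)/(N:ℝ)| := by
        have hm := mul_lt_mul_of_pos_right h (by positivity : (0:ℝ) < ((N:ℝ) - a)/(N:ℝ))
        rw [mul_assoc, hfrac, mul_one] at hm
        rw [ht2, h1α]
        linarith
      rw [if_pos (by rw [hcard_univ]; exact hcond)]
    · rw [if_neg h]
      split_ifs <;> norm_num
  -- outer Chernoff bound
  have hsum2 : ∑ It ∈ Finset.powersetCard a (Finset.univ : Finset (Fin N)), ind2 It
      ≤ 2 * (N.choose a : ℝ) * Real.exp (-(1/2) * α * (1 - α)^2 * N * δ^2) := by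
    calc ∑ It ∈ Finset.powersetCard a (Finset.univ : Finset (Fin N)), ind2 It
        ≤ ∑ It ∈ Finset.powersetCard a (Finset.univ : Finset (Fin N)),
          (if t2 < |((It ∩ A).card : ℝ)/(a:ℝ)
            - ((A.card : ℝ)/((Finset.univ : Finset (Fin N)).card : ℝ))| then (1:ℝ) else 0) :=
          Finset.sum_le_sum step2
      _ ≤ 2 * (((Finset.univ : Finset (Fin N)).card.choose a : ℝ))
            * Real.exp (-2 * a * t2^2) :=
          chernoff_two_sided Finset.univ A (Finset.subset_univ A) a
            (hn1.trans hn2) (by rw [hcard_univ]; exact haN') t2 ht2pos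
      _ = 2 * (N.choose a : ℝ) * Real.exp (-(1/2) * α * (1 - α)^2 * N * δ^2) := by
          rw [hcard_univ]
          congr 2
          rw [ht2, ha]
          ring
  -- final assembly
  calc ((Finset.powersetCard a (Finset.univ : Finset (Fin N))).card : ℝ)⁻¹ *
      ∑ It ∈ Finset.powersetCard a (Finset.univ : Finset (Fin N)),
        (((Finset.powersetCard n It).card : ℝ)⁻¹ *
          ∑ Is ∈ Finset.powersetCard n It,
            (if δ < |relHamming x Is - relHamming x Itᶜ| then (1 : ℝ) else 0))
      ≤ ((Finset.powersetCard a (Finset.univ : Finset (Fin N))).card : ℝ)⁻¹ *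
        ∑ It ∈ Finset.powersetCard a (Finset.univ : Finset (Fin N)), (Ein + ind2 It) := by
        apply mul_le_mul_of_nonneg_left (Finset.sum_le_sum step1)
        rw [hP]
        exact inv_nonneg.mpr hCP.le
    _ = (N.choose a : ℝ)⁻¹ * ((N.choose a : ℝ) * Ein
          + ∑ It ∈ Finset.powersetCard a (Finset.univ : Finset (Fin N)), ind2 It) := by
        rw [hP, Finset.sum_add_distrib, Finset.sum_const, nsmul_eq_mul,
          Finset.card_powersetCard, hcard_univ]
    _ ≤ (N.choose a : ℝ)⁻¹ * ((N.choose a : ℝ) * Ein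
          + 2 * (N.choose a : ℝ) * Real.exp (-(1/2) * α * (1 - α)^2 * N * δ^2)) := by
        apply mul_le_mul_of_nonneg_left _ (inv_nonneg.mpr hCP.le)
        exact add_le_add_right hsum2 _
    _ = Ein + 2 * Real.exp (-(1/2) * α * (1 - α)^2 * N * δ^2) := by
        field_simp
end

section
/- Let X and E be nonempty finite types, let T be a finite type, let q : T → ℝ≥0 be a probability mass function (Σ_{t∈T} q(t) = 1), let B : T → Finset X be a family of subsets of X, and let Q ≥ 0. Let ψ : X × E → ℂ be a unit vector, i.e. Σ_{(x,e)} |ψ(x,e)|² = 1. For each t ∈ T set λ⊥(t) = sqrt( Σ_{x ∉ B(t)} Σ_{e ∈ E} |ψ(x,e)|² ), which equals the trace distance between the pure state ψ and its renormalized orthogonal projection onto the coordinate subspace spanned by {(x,e) : x ∈ B(t), e ∈ E}. If for every x ∈ X one has Σ_{t : x ∉ B(t)} q(t) ≤ Q, then Σ_{t∈T} q(t)·λ⊥(t) ≤ sqrt(Q). -/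
open Finset

/-- Analytic core of Lemma B.1: let `q` be a probability mass function on a finite
type `T`, `B t ⊆ X` a family of subsets, and `ψ` a unit vector in `ℂ^{X×E}`.  For
each `t`, `λ⊥(t) = sqrt(Σ_{x ∉ B t} Σ_e |ψ(x,e)|²)` is the trace distance between
the pure state `ψ` and its renormalized projection onto the coordinates
`{(x,e) : x ∈ B t}`.  If for every `x` the total mass `Σ_{t : x ∉ B t} q t` is at
most `Q`, then `Σ_t q t · λ⊥(t) ≤ sqrt Q`. -/
theorem averaged_projection_distance_bound
    (X E T : Type*) [Fintype X] [Fintype E] [Fintype T]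
    [DecidableEq X] [Nonempty X] [Nonempty E]
    (q : T → ℝ) (hq0 : ∀ t, 0 ≤ q t) (hq1 : ∑ t, q t = 1)
    (B : T → Finset X) (Q : ℝ) (hQ : 0 ≤ Q)
    (ψ : X × E → ℂ) (hψ : ∑ p : X × E, ‖ψ p‖^2 = 1)
    (hB : ∀ x : X, ∑ t ∈ Finset.univ.filter (fun t => x ∉ B t), q t ≤ Q) :
    ∑ t, q t * Real.sqrt (∑ x ∈ (B t)ᶜ, ∑ e, ‖ψ (x, e)‖^2) ≤ Real.sqrt Q := by
  classical
  set c : X → ℝ := fun x => ∑ e, ‖ψ (x, e)‖^2 with hc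
  have hc0 : ∀ x, 0 ≤ c x := fun x =>
    Finset.sum_nonneg fun e _ => sq_nonneg _
  set a : T → ℝ := fun t => ∑ x ∈ (B t)ᶜ, c x with ha
  have ha0 : ∀ t, 0 ≤ a t := fun t =>
    Finset.sum_nonneg fun x _ => hc0 x
  -- key bound on the average of a
  have hkey : ∑ t, q t * a t ≤ Q := by
    have h1 : ∑ t, q t * a t
        = ∑ x, (∑ t ∈ Finset.univ.filter (fun t => x ∉ B t), q t) * c x := by
      have hcompl : ∀ t : T, (B t)ᶜ = Finset.univ.filter (fun x => x ∉ B t) := by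
        intro t; ext x; simp
      calc ∑ t, q t * a t
          = ∑ t : T, ∑ x : X, if x ∉ B t then q t * c x else 0 := by
            refine Finset.sum_congr rfl fun t _ => ?_
            rw [ha]; dsimp only; rw [hcompl t, Finset.mul_sum, Finset.sum_filter]
        _ = ∑ x : X, ∑ t : T, if x ∉ B t then q t * c x else 0 := Finset.sum_comm
        _ = ∑ x, (∑ t ∈ Finset.univ.filter (fun t => x ∉ B t), q t) * c x := by
            refine Finset.sum_congr rfl fun x _ => ?_
            rw [Finset.sum_mul, Finset.sum_filter]
    rw [h1]
    have h2 : ∑ x, (∑ t ∈ Finset.univ.filter (fun t => x ∉ B t), q t) * c x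
        ≤ ∑ x, Q * c x := by
      refine Finset.sum_le_sum fun x _ => mul_le_mul_of_nonneg_right (hB x) (hc0 x)
    refine h2.trans ?_
    rw [← Finset.mul_sum]
    have hsum : ∑ x, c x = 1 := by
      rw [← hψ, Fintype.sum_prod_type]
    rw [hsum, mul_one]
  -- Cauchy–Schwarz: (∑ q t * sqrt (a t))² ≤ (∑ q t) * (∑ q t * a t)
  have hLHS0 : 0 ≤ ∑ t, q t * Real.sqrt (a t) :=
    Finset.sum_nonneg fun t _ => mul_nonneg (hq0 t) (Real.sqrt_nonneg _)
  have hCS : (∑ t, q t * Real.sqrt (a t))^2 ≤ Q := by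
    calc (∑ t, q t * Real.sqrt (a t))^2
        ≤ (∑ t, q t) * (∑ t, q t * a t) := by
          refine Finset.sum_sq_le_sum_mul_sum_of_sq_eq_mul Finset.univ
            (fun t _ => hq0 t) (fun t _ => mul_nonneg (hq0 t) (ha0 t)) fun t _ => ?_
          rw [mul_pow, Real.sq_sqrt (ha0 t)]; ring
      _ ≤ Q := by rw [hq1, one_mul]; exact hkey
  calc ∑ t, q t * Real.sqrt (a t)
      = Real.sqrt ((∑ t, q t * Real.sqrt (a t))^2) := (Real.sqrt_sq hLHS0).symm
    _ ≤ Real.sqrt Q := Real.sqrt_le_sqrt hCS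
end

section
/- Let N₁ and m be positive integers with 2m ≤ N₁. Sample θ uniformly from {0,1}^{N₁}. On the event that m ≤ w_H(θ) ≤ N₁ − m (so that the set Z(θ) of zero-positions of θ and the set O(θ) of one-positions of θ each have at least m elements), sample I₀ uniformly among the m-element subsets of Z(θ) and, independently given θ, sample I₁ uniformly among the m-element subsets of O(θ). Then the joint probability P(I₀ = A₀ and I₁ = A₁) is the same for every pair (A₀, A₁) of disjoint m-element subsets of {1,…,N₁}; explicitly, this common value equals 2^{−N₁} · Σ_{n=m}^{N₁−m} C(N₁−2m, n−m) / ( C(n,m) · C(N₁−n,m) ). -/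
open Finset

/-- Hamming weight of a binary string `θ : Fin N → Bool`. -/
def hammingWeight {N : ℕ} (θ : Fin N → Bool) : ℕ :=
  (Finset.univ.filter fun i => θ i = true).card

/-- The joint probability `P(I₀ = A₀ ∧ I₁ = A₁)` of the string-separation sampling:
`θ` is uniform on `{0,1}^{N₁}`; on the event `m ≤ w_H(θ) ≤ N₁ − m`, `I₀` is a
uniform `m`-element subset of the zero-positions of `θ` and `I₁` a uniform
`m`-element subset of the one-positions of `θ` (independently given `θ`).  For a
given `θ`, the conditional probability of picking `(A₀, A₁)` is
`1 / (C(N₁ − w_H θ, m) · C(w_H θ, m))` when `A₀` lies in the zero-positions and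
`A₁` in the one-positions, and `0` otherwise. -/
noncomputable def sepJointProb (N₁ m : ℕ) (A₀ A₁ : Finset (Fin N₁)) : ℝ :=
  ((2 : ℝ) ^ N₁)⁻¹ *
    ∑ θ : Fin N₁ → Bool,
      (if m ≤ hammingWeight θ ∧ hammingWeight θ ≤ N₁ - m ∧
          (∀ i ∈ A₀, θ i = false) ∧ (∀ j ∈ A₁, θ j = true)
        then (((N₁ - hammingWeight θ).choose m * (hammingWeight θ).choose m : ℕ) : ℝ)⁻¹
        else 0)

lemma sep_count (N₁ m n : ℕ) (A₀ A₁ : Finset (Fin N₁)) (hdisj : Disjoint A₀ A₁)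
    (hA₀ : A₀.card = m) (hA₁ : A₁.card = m) (hn : m ≤ n) :
    ((Finset.univ : Finset (Fin N₁ → Bool)).filter fun θ =>
        hammingWeight θ = n ∧ (∀ i ∈ A₀, θ i = false) ∧ (∀ j ∈ A₁, θ j = true)).card
      = (N₁ - 2 * m).choose (n - m) := by
  have hcardS : ((A₀ ∪ A₁)ᶜ : Finset (Fin N₁)).card = N₁ - 2 * m := by
    rw [card_compl, card_union_of_disjoint hdisj, hA₀, hA₁, Fintype.card_fin, two_mul]
  rw [← hcardS, ← Finset.card_powersetCard]
  refine Finset.card_bij' (fun θ _ => (Finset.univ.filter fun i => θ i = true) \ A₁)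
    (fun T _ => fun i => decide (i ∈ T ∪ A₁)) ?_ ?_ ?_ ?_
  · intro θ hθ
    simp only [mem_filter, mem_univ, true_and] at hθ
    obtain ⟨hw, h0, h1⟩ := hθ
    rw [Finset.mem_powersetCard]
    constructor
    · intro i hi
      simp only [mem_sdiff, mem_filter, mem_univ, true_and] at hi
      simp only [mem_compl, mem_union]
      rintro (hiA0 | hiA1)
      · exact absurd (h0 i hiA0) (by simp [hi.1])
      · exact hi.2 hiA1
    · have hsub : A₁ ⊆ Finset.univ.filter fun i => θ i = true := fun j hj => by
        simp [h1 j hj]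
      rw [Finset.card_sdiff_of_subset hsub, hA₁]
      unfold hammingWeight at hw
      rw [hw]
  · intro T hT
    rw [Finset.mem_powersetCard] at hT
    obtain ⟨hTsub, hTcard⟩ := hT
    have hTA₁ : Disjoint T A₁ := by
      refine Finset.disjoint_left.2 fun i hi hi1 => ?_
      have := hTsub hi
      simp only [mem_compl, mem_union] at this
      exact this (Or.inr hi1)
    simp only [mem_filter, mem_univ, true_and]
    refine ⟨?_, ?_, ?_⟩
    · unfold hammingWeight
      have : (Finset.univ.filter fun i => decide (i ∈ T ∪ A₁) = true) = T ∪ A₁ := by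
        ext i; simp
      rw [this, card_union_of_disjoint hTA₁, hTcard, hA₁]
      omega
    · intro i hi
      have h := hTsub
      simp only [decide_eq_false_iff_not, mem_union]
      rintro (hiT | hi1)
      · have := hTsub hiT
        simp only [mem_compl, mem_union] at this
        exact this (Or.inl hi)
      · exact Finset.disjoint_left.1 hdisj hi hi1
    · intro j hj
      simp [Finset.mem_union, hj]
  · intro θ hθ
    simp only [mem_filter, mem_univ, true_and] at hθ
    obtain ⟨hw, h0, h1⟩ := hθ
    funext i
    by_cases hi1 : i ∈ A₁
    · simp [hi1, h1 i hi1]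
    · by_cases h : θ i = true <;> simp [h, hi1]
  · intro T hT
    rw [Finset.mem_powersetCard] at hT
    obtain ⟨hTsub, _⟩ := hT
    ext i
    simp only [mem_sdiff, mem_filter, mem_univ, true_and, decide_eq_true_eq, mem_union]
    constructor
    · rintro ⟨hiTA, hi1⟩
      rcases hiTA with hiT | hi1'
      · exact hiT
      · exact absurd hi1' hi1
    · intro hiT
      have := hTsub hiT
      simp only [mem_compl, mem_union] at this
      exact ⟨Or.inl hiT, fun h => this (Or.inr h)⟩

/-- Eq. (sepprobability) in the proof of Lemma 4.2: the joint probability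
`P(I₀ = A₀ ∧ I₁ = A₁)` equals
`2^{−N₁} · Σ_{n=m}^{N₁−m} C(N₁−2m, n−m) / (C(n,m)·C(N₁−n,m))` for every pair
`(A₀, A₁)` of disjoint `m`-element subsets; in particular it is the same for all
such pairs. -/
theorem sepJointProb_eq (N₁ m : ℕ) (hN : 0 < N₁) (hm : 0 < m) (h2m : 2 * m ≤ N₁)
    (A₀ A₁ : Finset (Fin N₁)) (hdisj : Disjoint A₀ A₁)
    (hA₀ : A₀.card = m) (hA₁ : A₁.card = m) :
    sepJointProb N₁ m A₀ A₁
      = ((2 : ℝ) ^ N₁)⁻¹ *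
          ∑ n ∈ Finset.Icc m (N₁ - m),
            ((N₁ - 2 * m).choose (n - m) : ℝ) / ((n.choose m : ℝ) * ((N₁ - n).choose m : ℝ)) := by
  unfold sepJointProb
  congr 1
  have hmaps : ∀ θ ∈ (Finset.univ : Finset (Fin N₁ → Bool)),
      hammingWeight θ ∈ Finset.range (N₁ + 1) := by
    intro θ _
    rw [Finset.mem_range, Nat.lt_succ_iff]
    unfold hammingWeight
    exact (Finset.card_filter_le _ _).trans (by simp)
  rw [← Finset.sum_fiberwise_of_maps_to hmaps]
  rw [← Finset.sum_subset (by
      intro x hx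
      rw [Finset.mem_Icc] at hx
      rw [Finset.mem_range]
      omega : Finset.Icc m (N₁ - m) ⊆ Finset.range (N₁ + 1))]
  · refine Finset.sum_congr rfl fun n hn => ?_
    rw [Finset.mem_Icc] at hn
    have hsum : ∀ θ ∈ Finset.univ.filter fun θ : Fin N₁ → Bool => hammingWeight θ = n,
        (if m ≤ hammingWeight θ ∧ hammingWeight θ ≤ N₁ - m ∧
            (∀ i ∈ A₀, θ i = false) ∧ (∀ j ∈ A₁, θ j = true)
          then (((N₁ - hammingWeight θ).choose m * (hammingWeight θ).choose m : ℕ) : ℝ)⁻¹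
          else 0)
        = (if (∀ i ∈ A₀, θ i = false) ∧ (∀ j ∈ A₁, θ j = true)
          then (((N₁ - n).choose m * n.choose m : ℕ) : ℝ)⁻¹ else 0) := by
      intro θ hθ
      simp only [mem_filter, mem_univ, true_and] at hθ
      rw [hθ]
      by_cases h : (∀ i ∈ A₀, θ i = false) ∧ (∀ j ∈ A₁, θ j = true)
      · rw [if_pos ⟨hn.1, hn.2, h⟩, if_pos h]
      · rw [if_neg (by tauto), if_neg h]
    rw [Finset.sum_congr rfl hsum, Finset.sum_ite, Finset.sum_const_zero, add_zero,
      Finset.sum_const, nsmul_eq_mul, Finset.filter_filter]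
    have hcount := sep_count N₁ m n A₀ A₁ hdisj hA₀ hA₁ hn.1
    have hcast : ((Finset.univ.filter fun θ : Fin N₁ → Bool => hammingWeight θ = n ∧
        (∀ i ∈ A₀, θ i = false) ∧ (∀ j ∈ A₁, θ j = true)).card : ℝ)
        = ((N₁ - 2 * m).choose (n - m) : ℝ) := by exact_mod_cast hcount
    rw [hcast]
    rw [Nat.cast_mul, mul_inv, div_eq_mul_inv, mul_inv]
    ring
  · intro n hn hn'
    refine Finset.sum_eq_zero fun θ hθ => ?_
    simp only [mem_filter, mem_univ, true_and] at hθ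
    rw [Finset.mem_range] at hn
    rw [Finset.mem_Icc] at hn'
    rw [if_neg]
    rw [hθ]
    omega
end
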